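/- arXiv:1310.7570 — 4 statements merged into one kernel-verified Lean document; each statement's English description precedes it below -/
import Mathlib

section
/- For k ∈ {3,4} and all z, x, g, η ∈ ℂ one has the identity θ_k(z+g+η|τ/2) · θ₁(z−η−g+x|τ) · θ₁(z−η−g−x|τ) − θ_k(z−g−η|τ/2) · θ₁(z+η+g+x|τ) · θ₁(z+η+g−x|τ) = θ₁(2z|τ) · θ₁(−2g−2η|τ) · θ_k(x|τ/2). -/
noncomputable section

open Complex BigOperators Finset

local notation "π" => (Real.pi : ℂ)

/-- Jacobi theta function θ₁(z|σ). -/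
def theta1 (z σ : ℂ) : ℂ :=
  -∑' n : ℤ, Complex.exp (π * I * ((n : ℂ) + 1/2)^2 * σ) *
      Complex.exp (2 * π * I * ((n : ℂ) + 1/2) * (z + 1/2))

/-- Jacobi theta function θ₂(z|σ). -/
def theta2 (z σ : ℂ) : ℂ := theta1 (z + 1/2) σ

/-- Jacobi theta function θ₃(z|σ). -/
def theta3 (z σ : ℂ) : ℂ :=
  Complex.exp (π * I * σ / 4 + π * I * z) * theta2 (z + σ/2) σ

/-- Jacobi theta function θ₄(z|σ). -/
def theta4 (z σ : ℂ) : ℂ := theta3 (z + 1/2) σ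

/-- R(σ) = e^{-πiσ/4} / (i (e^{2πiσ}; e^{2πiσ})_∞). -/
def Rfun (σ : ℂ) : ℂ :=
  Complex.exp (-π * I * σ / 4) /
    (I * ∏' k : ℕ, (1 - Complex.exp (2 * π * I * σ * ((k : ℂ) + 1))))

/-!
Expand everything into series of the terms `e^{2πinz + πin²σ}` of `jacobiTheta₂`: at modulus `τ/2`,
`θ₃(x) = jacobiTheta₂ x` and `θ₄(x) = jacobiTheta₂ (x + 1/2)`, and with `r = m + n + 1`, `s = m - n`
the product `θ₁(u+v|τ) θ₁(u-v|τ)` becomes a double series of modulus `τ/2` over the pairs `(r, s)`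
with `r + s` odd. Each of the three products in the identity is then a series over `ℤ³` whose terms,
after permuting the indices, agree up to a sign and the parity constraints; the identity reduces to
a sign identity that only depends on the parities of the indices.
-/

lemma exp_add_pi_mul_I_int (B : ℂ) (m : ℤ) : cexp (B + π * I * m) = (-1) ^ m * cexp B := by
  rw [exp_add, mul_comm, mul_comm _ (m : ℂ), exp_int_mul, exp_pi_mul_I]

lemma jacobiTheta₂_term_add_half_int (n δ : ℤ) (z σ : ℂ) :
    jacobiTheta₂_term n (z + δ / 2) σ = (-1) ^ (δ * n) * jacobiTheta₂_term n z σ := by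
  rw [jacobiTheta₂_term, jacobiTheta₂_term, ← exp_add_pi_mul_I_int]
  push_cast
  ring_nf

lemma jacobiTheta₂_term_add_half (n : ℤ) (z σ : ℂ) :
    jacobiTheta₂_term n (z + 1 / 2) σ = (-1) ^ n * jacobiTheta₂_term n z σ := by
  simpa using jacobiTheta₂_term_add_half_int n 1 z σ

def theta1Term (n : ℤ) (z σ : ℂ) : ℂ :=
  cexp (π * I * ((n : ℂ) + 1 / 2) ^ 2 * σ + 2 * π * I * ((n : ℂ) + 1 / 2) * (z + 1 / 2))

lemma theta1_eq_neg_tsum (z σ : ℂ) : theta1 z σ = -∑' n : ℤ, theta1Term n z σ := by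
  simp only [theta1, theta1Term, exp_add]

lemma theta1Term_eq (n : ℤ) (z σ : ℂ) : theta1Term n z σ =
    cexp (π * I * σ / 4 + π * I * (z + 1 / 2)) * jacobiTheta₂_term n (z + 1 / 2 + σ / 2) σ := by
  rw [theta1Term, jacobiTheta₂_term, ← exp_add]
  ring_nf

lemma summable_theta1Term {σ : ℂ} (hσ : 0 < σ.im) (z : ℂ) : Summable (theta1Term · z σ) := by
  simpa only [theta1Term_eq] using ((summable_jacobiTheta₂_term_iff _ σ).mpr hσ).mul_left
    (cexp (π * I * σ / 4 + π * I * (z + 1 / 2)))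

lemma theta3_eq_jacobiTheta₂ (z σ : ℂ) : theta3 z σ = jacobiTheta₂ z σ := by
  have shift (n : ℤ) : -(cexp (π * I * σ / 4 + π * I * z) * theta1Term n (z + σ / 2 + 1 / 2) σ)
      = jacobiTheta₂_term (n + 1) z σ := by
    rw [theta1Term, jacobiTheta₂_term, ← exp_add, neg_eq_iff_eq_neg, ← neg_one_mul,
      ← (odd_two_mul_add_one n).neg_one_zpow, ← exp_add_pi_mul_I_int]
    push_cast
    ring_nf
  rw [theta3, theta2, theta1_eq_neg_tsum, mul_neg, ← tsum_mul_left, ← tsum_neg, jacobiTheta₂,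
    ← (Equiv.addRight (1 : ℤ)).tsum_eq (jacobiTheta₂_term · z σ)]
  exact tsum_congr fun n => shift n

lemma theta4_eq_jacobiTheta₂ (z σ : ℂ) : theta4 z σ = jacobiTheta₂ (z + 1 / 2) σ :=
  theta3_eq_jacobiTheta₂ _ _

lemma neg_one_zpow_sign_identity (δ k r s : ℤ) :
    (if Odd (r + s) then (-1 : ℂ) ^ (δ * k) * (-1) ^ r else 0)
      - (if Odd (k + s) then (-1 : ℂ) ^ (δ * r) * (-1) ^ k else 0)
    = if Odd (r + k) then (-1 : ℂ) ^ r * (-1) ^ (δ * s) else 0 := by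
  simp only [neg_one_zpow_eq_ite, ← Int.not_even_iff_odd, Int.even_add, Int.even_mul]
  by_cases Even δ <;> by_cases Even k <;> by_cases Even r <;> by_cases Even s <;> simp [*]

def oddPairTerm (p : ℤ × ℤ) (u v σ : ℂ) : ℂ :=
  if Odd (p.1 + p.2) then jacobiTheta₂_term p.1 u σ * jacobiTheta₂_term p.2 v σ else 0

lemma summable_oddPairTerm {σ : ℂ} (hσ : 0 < σ.im) (u v : ℂ) :
    Summable (oddPairTerm · u v σ) := by
  have hJ (w : ℂ) := ((summable_jacobiTheta₂_term_iff w σ).mpr hσ).norm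
  refine .of_norm_bounded ((hJ u).mul_norm (hJ v)) fun p => ?_
  rw [oddPairTerm]
  split_ifs
  · exact le_rfl
  · rw [norm_zero]
    positivity

lemma theta1_mul_theta1 {τ : ℂ} (hτ : 0 < τ.im) (u v : ℂ) :
    theta1 (u + v) τ * theta1 (u - v) τ = ∑' p : ℤ × ℤ, oddPairTerm p (u + 1 / 2) v (τ / 2) := by
  set embed : ℤ × ℤ → ℤ × ℤ := fun q => (q.1 + q.2 + 1, q.1 - q.2)
  have embed_injective : embed.Injective := by
    rintro ⟨m, n⟩ ⟨m', n'⟩ h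
    simp only [embed, Prod.mk.injEq] at h ⊢
    omega
  have support_subset : (oddPairTerm · (u + 1 / 2) v (τ / 2)).support ⊆ Set.range embed := by
    rintro ⟨r, s⟩ hp
    by_cases h : Odd (r + s)
    · obtain ⟨t, ht⟩ := h
      exact ⟨(t, r - 1 - t), by simp only [embed, Prod.mk.injEq]; omega⟩
    · simp [oddPairTerm, h] at hp
  have term_eq (q : ℤ × ℤ) : theta1Term q.1 (u + v) τ * theta1Term q.2 (u - v) τ
      = oddPairTerm (embed q) (u + 1 / 2) v (τ / 2) := by
    simp only [embed]
    rw [oddPairTerm, if_pos ⟨q.1, by ring⟩, theta1Term, theta1Term, jacobiTheta₂_term,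
      jacobiTheta₂_term, ← exp_add, ← exp_add]
    push_cast
    ring_nf
  calc theta1 (u + v) τ * theta1 (u - v) τ
      = (∑' m : ℤ, theta1Term m (u + v) τ) * ∑' n : ℤ, theta1Term n (u - v) τ := by
        rw [theta1_eq_neg_tsum, theta1_eq_neg_tsum, neg_mul_neg]
    _ = ∑' q : ℤ × ℤ, theta1Term q.1 (u + v) τ * theta1Term q.2 (u - v) τ :=
        tsum_mul_tsum_of_summable_norm (summable_theta1Term hτ _).norm
          (summable_theta1Term hτ _).norm
    _ = ∑' p : ℤ × ℤ, oddPairTerm p (u + 1 / 2) v (τ / 2) := by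
        rw [tsum_congr term_eq]
        exact embed_injective.tsum_eq support_subset

lemma jacobiTheta₂_term_mul_oddPairTerm_sub (δ k r s : ℤ) (A B C σ : ℂ) :
    jacobiTheta₂_term k (A + δ / 2) σ * oddPairTerm (r, s) (B + 1 / 2) C σ
      - jacobiTheta₂_term r (B + δ / 2) σ * oddPairTerm (k, s) (A + 1 / 2) C σ
    = oddPairTerm (r, k) (B + 1 / 2) A σ * jacobiTheta₂_term s (C + δ / 2) σ := by
  set X := jacobiTheta₂_term k A σ * jacobiTheta₂_term r B σ * jacobiTheta₂_term s C σ
  have first : jacobiTheta₂_term k (A + δ / 2) σ * oddPairTerm (r, s) (B + 1 / 2) C σ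
      = (if Odd (r + s) then (-1 : ℂ) ^ (δ * k) * (-1) ^ r else 0) * X := by
    simp only [oddPairTerm, jacobiTheta₂_term_add_half_int, jacobiTheta₂_term_add_half]
    split_ifs <;> ring
  have second : jacobiTheta₂_term r (B + δ / 2) σ * oddPairTerm (k, s) (A + 1 / 2) C σ
      = (if Odd (k + s) then (-1 : ℂ) ^ (δ * r) * (-1) ^ k else 0) * X := by
    simp only [oddPairTerm, jacobiTheta₂_term_add_half_int, jacobiTheta₂_term_add_half]
    split_ifs <;> ring
  have third : oddPairTerm (r, k) (B + 1 / 2) A σ * jacobiTheta₂_term s (C + δ / 2) σ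
      = (if Odd (r + k) then (-1 : ℂ) ^ r * (-1) ^ (δ * s) else 0) * X := by
    simp only [oddPairTerm, jacobiTheta₂_term_add_half_int, jacobiTheta₂_term_add_half]
    split_ifs <;> ring
  rw [first, second, third, ← sub_mul, neg_one_zpow_sign_identity]

theorem jacobiTheta₂_mul_theta1_mul_theta1_sub {τ : ℂ} (hτ : 0 < τ.im) (δ : ℤ) (A B C : ℂ) :
    jacobiTheta₂ (A + δ / 2) (τ / 2) * theta1 (B + C) τ * theta1 (B - C) τ
      - jacobiTheta₂ (B + δ / 2) (τ / 2) * theta1 (A + C) τ * theta1 (A - C) τ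
    = theta1 (B + A) τ * theta1 (B - A) τ * jacobiTheta₂ (C + δ / 2) (τ / 2) := by
  have hσ : 0 < (τ / 2).im := by simpa using hτ
  have hJ (w : ℂ) := ((summable_jacobiTheta₂_term_iff w (τ / 2)).mpr hσ).norm
  have hP (u v : ℂ) := (summable_oddPairTerm hσ u v).norm
  let swap : ℤ × ℤ × ℤ ≃ ℤ × ℤ × ℤ :=
    ⟨fun v => (v.2.1, v.1, v.2.2), fun v => (v.2.1, v.1, v.2.2), fun _ => rfl, fun _ => rfl⟩
  let regroup : ℤ × ℤ × ℤ ≃ (ℤ × ℤ) × ℤ :=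
    ⟨fun v => ((v.2.1, v.1), v.2.2), fun u => (u.1.2, u.1.1, u.2), fun _ => rfl, fun _ => rfl⟩
  rw [mul_assoc, mul_assoc, theta1_mul_theta1 hτ, theta1_mul_theta1 hτ, theta1_mul_theta1 hτ,
    jacobiTheta₂, jacobiTheta₂, jacobiTheta₂,
    tsum_mul_tsum_of_summable_norm (hJ (A + δ / 2)) (hP (B + 1 / 2) C),
    tsum_mul_tsum_of_summable_norm (hJ (B + δ / 2)) (hP (A + 1 / 2) C),
    tsum_mul_tsum_of_summable_norm (hP (B + 1 / 2) A) (hJ (C + δ / 2)),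
    ← regroup.tsum_eq, ← swap.tsum_eq fun v : ℤ × ℤ × ℤ =>
      jacobiTheta₂_term v.1 (B + δ / 2) (τ / 2) * oddPairTerm v.2 (A + 1 / 2) C (τ / 2)]
  refine ((summable_mul_of_summable_norm (hJ _) (hP _ _)).tsum_sub
    (swap.summable_iff.mpr (summable_mul_of_summable_norm (hJ _) (hP _ _)))).symm.trans ?_
  exact tsum_congr fun v => jacobiTheta₂_term_mul_oddPairTerm_sub δ v.1 v.2.1 v.2.2 A B C (τ / 2)

/-- key theta-function identity behind the contiguous relation. -/
theorem theta_contiguous_identity (τ : ℂ) (hτ : 0 < τ.im)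
    (th : ℂ → ℂ → ℂ) (hth : th = theta3 ∨ th = theta4)
    (z x g η : ℂ) :
    th (z+g+η) (τ/2) * theta1 (z-η-g+x) τ * theta1 (z-η-g-x) τ
      - th (z-g-η) (τ/2) * theta1 (z+η+g+x) τ * theta1 (z+η+g-x) τ
    = theta1 (2*z) τ * theta1 (-2*g-2*η) τ * th x (τ/2) := by
  rw [show z - g - η = z - η - g by ring, show z + η + g = z + g + η by ring,
    show 2 * z = z - η - g + (z + g + η) by ring,
    show -2 * g - 2 * η = z - η - g - (z + g + η) by ring]
  rcases hth with rfl | rfl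
  · simpa only [theta3_eq_jacobiTheta₂, Int.cast_zero, zero_div, add_zero] using
      jacobiTheta₂_mul_theta1_mul_theta1_sub hτ 0 (z + g + η) (z - η - g) x
  · simpa only [theta4_eq_jacobiTheta₂, Int.cast_one] using
      jacobiTheta₂_mul_theta1_mul_theta1_sub hτ 1 (z + g + η) (z - η - g) x
end
end

section
/- Quasiperiodicity of the β-coefficients: for all integers m ≥ 0, 0 ≤ ℓ ≤ m, n, k, and every z ∈ ℂ at which all θ₁-factors in the denominators of β_ℓ^{(m)} at z and at z+η(n−2k) are nonzero, one has β_ℓ^{(m)}(z+η(n−2k)) = (−1)^{nm} · e^{4πiz·m(n−2k)} · e^{2πiη·m(n−2k)²} · e^{πiτ(m−1)(m−2ℓ)(n−2k)} · β_ℓ^{(m)}(z). -/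
noncomputable section

open Complex BigOperators Finset

local notation "π" => (Real.pi : ℂ)

def cA (τ η : ℂ) : ℂ := Complex.exp (π*I*η) / Rfun τ

def cB (τ η : ℂ) : ℂ := Complex.exp (π*I*τ/2) / Rfun (2*η)

/-- Coefficient β_s^{(m)}(z). -/
def betaC (τ η : ℂ) (m s : ℕ) (z : ℂ) : ℂ :=
  (cB τ η)^m *
  ((∏ j ∈ Finset.range m, theta1 (τ*((j:ℂ)+1)) (2*η)) /
   ((∏ j ∈ Finset.range s, theta1 (τ*((j:ℂ)+1)) (2*η)) *
    (∏ j ∈ Finset.range (m-s), theta1 (τ*((j:ℂ)+1)) (2*η)))) *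
    theta1 (2*z + τ*((m:ℂ) - 2*s)) (2*η) /
    ∏ j ∈ Finset.range (m+1), theta1 (2*z - τ*((s:ℂ) - (j:ℂ))) (2*η)

/-!
Shifting `z` by `Nη` shifts every argument `2z + c` of `θ₁(· | 2η)` in `β_l^{(m)}` by `N · 2η`,
and `θ₁(w + Nσ | σ) = (-1)^N e^{-πiN²σ - 2πiNw} θ₁(w | σ)` (reindex the defining series by
`n ↦ n + N`). Dividing the multiplier of the numerator by those of the `m + 1` denominator
factors gives the claimed factor; the Gauss sum `∑_{j ≤ m} j = m(m+1)/2` produces its `τ`-term.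
Replacing `n` by `N = n - 2k` does not change the sign `(-1)^{nm}`.
-/

lemma neg_one_zpow_eq_exp (N : ℤ) : (-1 : ℂ) ^ N = Complex.exp (-(π * I * N)) := by
  rw [show -(π * I * N) = ((-N : ℤ) : ℂ) * (π * I) by push_cast; ring, Complex.exp_int_mul,
    Complex.exp_pi_mul_I, zpow_neg, ← inv_zpow, inv_neg_one]

lemma neg_one_zpow_eq_of_even_sub {a b : ℤ} (h : Even (a - b)) : (-1 : ℂ) ^ a = (-1 : ℂ) ^ b := by
  rw [show a = b + (a - b) by ring, zpow_add₀ (by norm_num), h.neg_one_zpow, mul_one]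

lemma sum_range_succ_natCast_mul_two (m : ℕ) :
    (∑ j ∈ range (m + 1), (j : ℂ)) * 2 = m * (m + 1) := by
  induction m with
  | zero => simp
  | succ m ih => rw [sum_range_succ, add_mul, ih]; push_cast; ring

theorem theta1_add_int_mul (z σ : ℂ) (N : ℤ) :
    theta1 (z + N * σ) σ =
      (-1) ^ N * Complex.exp (-(π * I * N ^ 2 * σ) - 2 * π * I * N * z) * theta1 z σ := by
  set term : ℂ → ℤ → ℂ := fun w n =>
    Complex.exp (π * I * ((n : ℂ) + 1 / 2) ^ 2 * σ) *
      Complex.exp (2 * π * I * ((n : ℂ) + 1 / 2) * (w + 1 / 2)) with hterm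
  have hshift : ∀ n : ℤ, term (z + N * σ) n =
      (-1) ^ N * Complex.exp (-(π * I * N ^ 2 * σ) - 2 * π * I * N * z) * term z (n + N) := by
    intro n
    simp only [hterm, neg_one_zpow_eq_exp, ← Complex.exp_add]
    congr 1
    push_cast
    ring
  -- reindexing a `tsum` along the bijection `n ↦ n + N` needs no summability
  change -∑' n, term (z + N * σ) n = _ * -∑' n, term z n
  rw [tsum_congr hshift, tsum_mul_left, ← (Equiv.addRight N).tsum_eq (term z)]
  simp only [Equiv.coe_addRight]
  ring

theorem prod_theta1_add_int_mul {ι : Type*} (s : Finset ι) (w : ι → ℂ) (σ : ℂ) (N : ℤ) :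
    ∏ i ∈ s, theta1 (w i + N * σ) σ =
      ((-1) ^ N) ^ #s *
        Complex.exp (-(#s * (π * I * N ^ 2 * σ)) - 2 * π * I * N * ∑ i ∈ s, w i) *
        ∏ i ∈ s, theta1 (w i) σ := by
  simp only [theta1_add_int_mul, prod_mul_distrib, prod_const, ← Complex.exp_sum]
  congr 3
  rw [sum_sub_distrib, sum_const, nsmul_eq_mul, mul_sum, mul_neg]

theorem betaC_add_int_mul (τ η : ℂ) (m l : ℕ) (N : ℤ) (z : ℂ) :
    betaC τ η m l (z + η * N) =
      (-1 : ℂ) ^ (N * (m : ℤ)) * Complex.exp (4 * π * I * z * m * N) *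
      Complex.exp (2 * π * I * η * m * (N : ℂ) ^ 2) *
      Complex.exp (π * I * τ * ((m : ℂ) - 1) * ((m : ℂ) - 2 * l) * N) *
      betaC τ η m l z := by
  have hnum : theta1 (2 * (z + η * N) + τ * ((m : ℂ) - 2 * l)) (2 * η) =
      (-1) ^ N * Complex.exp (-(π * I * N ^ 2 * (2 * η)) -
        2 * π * I * N * (2 * z + τ * ((m : ℂ) - 2 * l))) *
      theta1 (2 * z + τ * ((m : ℂ) - 2 * l)) (2 * η) := by
    rw [← theta1_add_int_mul]
    ring_nf
  set S := ∑ j ∈ range (m + 1), (2 * z - τ * ((l : ℂ) - j)) with hS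
  set C := ((-1 : ℂ) ^ N) ^ (m + 1) *
    Complex.exp (-((m + 1) * (π * I * N ^ 2 * (2 * η))) - 2 * π * I * N * S) with hC
  have hden : ∏ j ∈ range (m + 1), theta1 (2 * (z + η * N) - τ * ((l : ℂ) - j)) (2 * η) =
      C * ∏ j ∈ range (m + 1), theta1 (2 * z - τ * ((l : ℂ) - j)) (2 * η) := by
    have := prod_theta1_add_int_mul (range (m + 1)) (fun j : ℕ => 2 * z - τ * ((l : ℂ) - j))
      (2 * η) N
    push_cast [card_range] at this
    rw [← this]
    refine prod_congr rfl fun j _ => ?_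
    ring_nf
  have hS_closed : S = (m + 1) * (2 * z - τ * l) + τ * (m * (m + 1) / 2) := by
    simp only [hS, mul_sub, sum_sub_distrib, sum_const, card_range, nsmul_eq_mul, ← mul_sum]
    push_cast
    linear_combination τ / 2 * sum_range_succ_natCast_mul_two m
  -- the signs agree since `N ≡ N * m + N * (m + 1) (mod 2)`; the exponents agree exactly
  have hfactor : (-1 : ℂ) ^ N * Complex.exp (-(π * I * N ^ 2 * (2 * η)) -
        2 * π * I * N * (2 * z + τ * ((m : ℂ) - 2 * l))) =
      (-1 : ℂ) ^ (N * (m : ℤ)) * Complex.exp (4 * π * I * z * m * N) *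
      Complex.exp (2 * π * I * η * m * (N : ℂ) ^ 2) *
      Complex.exp (π * I * τ * ((m : ℂ) - 1) * ((m : ℂ) - 2 * l) * N) * C := by
    have hsign : (-1 : ℂ) ^ N = (-1) ^ (N * (m : ℤ)) * ((-1) ^ N) ^ (m + 1) := by
      rw [zpow_mul, zpow_natCast, pow_succ, ← mul_assoc, ← mul_pow, ← mul_zpow]
      norm_num
    have hexp : Complex.exp (-(π * I * N ^ 2 * (2 * η)) -
          2 * π * I * N * (2 * z + τ * ((m : ℂ) - 2 * l))) =
        Complex.exp (4 * π * I * z * m * N) * Complex.exp (2 * π * I * η * m * (N : ℂ) ^ 2) *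
        Complex.exp (π * I * τ * ((m : ℂ) - 1) * ((m : ℂ) - 2 * l) * N) *
        Complex.exp (-((m + 1) * (π * I * N ^ 2 * (2 * η))) - 2 * π * I * N * S) := by
      simp only [← Complex.exp_add, hS_closed]
      ring_nf
    rw [hC, hexp]
    nth_rw 1 [hsign]
    ring
  have hC0 : C ≠ 0 :=
    mul_ne_zero (pow_ne_zero _ (zpow_ne_zero _ (by norm_num))) (Complex.exp_ne_zero _)
  unfold betaC
  rw [hnum, hden, hfactor, mul_assoc _ C, mul_left_comm _ C, mul_left_comm _ C,
    mul_div_mul_left _ _ hC0]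
  ring

theorem beta_quasiperiodicity_general (τ η : ℂ) (m l : ℕ) (n k : ℤ) (z : ℂ) :
    betaC τ η m l (z + η*((n:ℂ)-2*(k:ℂ))) =
      (-1:ℂ)^(n*(m:ℤ)) * Complex.exp (4*π*I*z*(m:ℂ)*((n:ℂ)-2*(k:ℂ))) *
      Complex.exp (2*π*I*η*(m:ℂ)*((n:ℂ)-2*(k:ℂ))^2) *
      Complex.exp (π*I*τ*((m:ℂ)-1)*((m:ℂ)-2*(l:ℂ))*((n:ℂ)-2*(k:ℂ))) *
      betaC τ η m l z := by
  -- `n - 2k` has the parity of `n`, so the sign may be taken with respect to the shift itself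
  have hsign : (-1 : ℂ) ^ (n * (m : ℤ)) = (-1) ^ ((n - 2 * k) * (m : ℤ)) :=
    neg_one_zpow_eq_of_even_sub ⟨k * m, by ring⟩
  have hshift : (n : ℂ) - 2 * k = ((n - 2 * k : ℤ) : ℂ) := by push_cast; ring
  rw [hsign, hshift]
  exact betaC_add_int_mul τ η m l (n - 2 * k) z

/-- quasiperiodicity of the coefficients β_l^{(m)}. -/
theorem beta_quasiperiodicity (τ η : ℂ) (hτ : 0 < τ.im) (hη : 0 < η.im)
    (m l : ℕ) (hl : l ≤ m) (n k : ℤ) (z : ℂ)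
    (hden : ∀ j : ℕ, j ≤ m →
        theta1 (2*z - τ*((l:ℂ)-(j:ℂ))) (2*η) ≠ 0 ∧
        theta1 (2*(z + η*((n:ℂ)-2*(k:ℂ))) - τ*((l:ℂ)-(j:ℂ))) (2*η) ≠ 0)
    (hbin : ∀ i : ℕ, 1 ≤ i → i ≤ m → theta1 (τ*(i:ℂ)) (2*η) ≠ 0) :
    betaC τ η m l (z + η*((n:ℂ)-2*(k:ℂ))) =
      (-1:ℂ)^(n*(m:ℤ)) * Complex.exp (4*π*I*z*(m:ℂ)*((n:ℂ)-2*(k:ℂ))) *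
      Complex.exp (2*π*I*η*(m:ℂ)*((n:ℂ)-2*(k:ℂ))^2) *
      Complex.exp (π*I*τ*((m:ℂ)-1)*((m:ℂ)-2*(l:ℂ))*((n:ℂ)-2*(k:ℂ))) *
      betaC τ η m l z :=
  beta_quasiperiodicity_general τ η m l n k z
end
end

section
/- Conjugation of the discrete operator M(mτ/2) by theta-function powers: for k ∈ {3,4}, all integers n ≥ 0 and m ≥ 0, every function f : ℂ → ℂ, and every z ∈ ℂ such that θ_k(z+(m−2s)τ/2|τ/2) ≠ 0 for all 0 ≤ s ≤ m and all θ₁-factors in the denominators of β_s^{(m)}(z) are nonzero, one has θ_k(z|τ/2)^n · [M(mτ/2)(w ↦ θ_k(w|τ/2)^{−n} f(w))](z) = (−1)^{mn·δ_{k,4}} · e^{−2πinz²/τ} · [M(mτ/2)(w ↦ e^{2πinw²/τ} f(w))](z). -/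
noncomputable section

open Complex BigOperators Finset

local notation "π" => (Real.pi : ℂ)

/-- The finite-difference operator M(mτ/2). -/
def MtauOp (τ η : ℂ) (m : ℕ) (h : ℂ → ℂ) (z : ℂ) : ℂ :=
  Complex.exp (2*π*I*z^2/τ) * ∑ s ∈ Finset.range (m+1), (-1:ℂ)^s * betaC τ η m s z *
    Complex.exp (-2*π*I*(z + ((m:ℂ)-2*s)*τ/2)^2/τ) * h (z + ((m:ℂ)-2*s)*τ/2)

/-!
Multiplying `θ_k(w|τ/2)` by the Gaussian `e^{2πiw²/τ}` turns its quasi-periodicity into plain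
multiplicative periodicity, `G(w + τ/2) = (-1)^{δ_{k,4}} G(w)`. The operator `M(mτ/2)` only samples
its argument at the points `z + (m - 2s)τ/2`, which differ from `z` by integer multiples of `τ/2`;
there `θ_k^{-n}` agrees with `e^{2πinw²/τ}` up to the factor `θ_k(z)^{-n} e^{-2πinz²/τ}` and the sign
`(-1)^{(m-2s)nδ_{k,4}} = (-1)^{mnδ_{k,4}}`, so both factors pull out of the sum.
-/

theorem theta1_add_self (z σ : ℂ) :
    theta1 (z + σ) σ = -cexp (-π*I*σ - 2*π*I*z) * theta1 z σ := by
  unfold theta1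
  have hsign : -cexp (-π*I*σ - 2*π*I*z) = cexp (-π*I*σ - 2*π*I*z - π*I) := by
    rw [exp_sub _ (π*I), exp_pi_mul_I, div_neg, div_one]
  have hterm : ∀ n : ℤ,
      cexp (π * I * ((n:ℂ) + 1/2)^2 * σ) * cexp (2 * π * I * ((n:ℂ) + 1/2) * (z + σ + 1/2))
        = -cexp (-π*I*σ - 2*π*I*z) *
          (cexp (π * I * (((n + 1 : ℤ) : ℂ) + 1/2)^2 * σ) *
            cexp (2 * π * I * (((n + 1 : ℤ) : ℂ) + 1/2) * (z + 1/2))) := by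
    intro n
    simp only [hsign, ← Complex.exp_add]
    congr 1
    push_cast
    ring
  have hshift := (Equiv.addRight (1:ℤ)).tsum_eq fun n : ℤ =>
    cexp (π * I * ((n:ℂ) + 1/2)^2 * σ) * cexp (2 * π * I * ((n:ℂ) + 1/2) * (z + 1/2))
  simp only [Equiv.coe_addRight] at hshift
  rw [tsum_congr hterm, tsum_mul_left, hshift, mul_neg, neg_mul]

theorem theta2_add_self (z σ : ℂ) :
    theta2 (z + σ) σ = cexp (-π*I*σ - 2*π*I*z) * theta2 z σ := by
  have hsign : -cexp (-π*I*σ - 2*π*I*(z + 1/2)) = cexp (-π*I*σ - 2*π*I*z) := by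
    rw [show -π*I*σ - 2*π*I*(z + 1/2) = -π*I*σ - 2*π*I*z - π*I by ring,
      exp_sub _ (π*I), exp_pi_mul_I, div_neg, div_one, neg_neg]
  rw [theta2, theta2, add_right_comm, theta1_add_self, hsign]

theorem theta3_add_self (z σ : ℂ) :
    theta3 (z + σ) σ = cexp (-π*I*σ - 2*π*I*z) * theta3 z σ := by
  have hexp : cexp (π*I*σ/4 + π*I*(z + σ)) * cexp (-π*I*σ - 2*π*I*(z + σ/2))
      = cexp (-π*I*σ - 2*π*I*z) * cexp (π*I*σ/4 + π*I*z) := by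
    simp only [← Complex.exp_add]
    congr 1
    ring
  rw [theta3, theta3, add_right_comm, theta2_add_self, ← mul_assoc, hexp, mul_assoc]

theorem theta4_add_self (z σ : ℂ) :
    theta4 (z + σ) σ = -cexp (-π*I*σ - 2*π*I*z) * theta4 z σ := by
  have hsign : cexp (-π*I*σ - 2*π*I*(z + 1/2)) = -cexp (-π*I*σ - 2*π*I*z) := by
    rw [show -π*I*σ - 2*π*I*(z + 1/2) = -π*I*σ - 2*π*I*z - π*I by ring,
      exp_sub _ (π*I), exp_pi_mul_I, div_neg, div_one]
  rw [theta4, theta4, add_right_comm, theta3_add_self, hsign]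

theorem theta34_add_self {th : ℂ → ℂ → ℂ} {d : ℤ}
    (hth : (th = theta3 ∧ d = 0) ∨ (th = theta4 ∧ d = 1)) (w σ : ℂ) :
    th (w + σ) σ = (-1) ^ d * cexp (-π*I*σ - 2*π*I*w) * th w σ := by
  rcases hth with ⟨rfl, rfl⟩ | ⟨rfl, rfl⟩
  · rw [theta3_add_self, zpow_zero, one_mul]
  · rw [theta4_add_self, zpow_one, neg_one_mul]

theorem add_int_mul_eq_zpow_mul {R K : Type*} [Ring R] [GroupWithZero K] {G : R → K} {c : R}
    {ε : K} (hε : ε ≠ 0) (hG : ∀ w, G (w + c) = ε * G w) (z : R) (a : ℤ) :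
    G (z + a * c) = ε ^ a * G z := by
  have hper : Function.Periodic (fun b : ℤ => ε ^ (-b) * G (z + b * c)) 1 := by
    intro b
    simp only [Int.cast_add, Int.cast_one, add_mul, one_mul, ← add_assoc, hG, neg_add,
      zpow_add₀ hε, zpow_neg_one, mul_assoc, inv_mul_cancel_left₀ hε]
  have h := hper.int_mul_eq a
  simp only [mul_one, Int.cast_id, Int.cast_zero, zero_mul, add_zero, neg_zero, zpow_zero, one_mul] at h
  rw [← h, ← mul_assoc, ← zpow_add₀ hε, add_neg_cancel, zpow_zero, one_mul]

section HalfPeriod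

variable {g : ℂ → ℂ} {τ ε : ℂ}

theorem mul_cexp_sq_add_half_period (hτ : τ ≠ 0)
    (hg : ∀ w, g (w + τ/2) = ε * cexp (-π*I*(τ/2) - 2*π*I*w) * g w) (w : ℂ) :
    g (w + τ/2) * cexp (2*π*I*(w + τ/2)^2/τ) = ε * (g w * cexp (2*π*I*w^2/τ)) := by
  have hexp : cexp (-π*I*(τ/2) - 2*π*I*w) * cexp (2*π*I*(w + τ/2)^2/τ)
      = cexp (2*π*I*w^2/τ) := by
    rw [← Complex.exp_add]
    congr 1
    field_simp
    ring
  rw [hg]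
  linear_combination (ε * g w) * hexp

theorem pow_mul_zpow_neg_add_int_mul_half_period (hτ : τ ≠ 0) (hε : ε ≠ 0)
    (hg : ∀ w, g (w + τ/2) = ε * cexp (-π*I*(τ/2) - 2*π*I*w) * g w) (z : ℂ) (a : ℤ) (n : ℕ)
    (hza : g (z + a*(τ/2)) ≠ 0) :
    g z ^ n * g (z + a*(τ/2)) ^ (-(n:ℤ))
      = ε ^ (-(a*n)) * cexp (-2*π*I*n*z^2/τ) * cexp (2*π*I*n*(z + a*(τ/2))^2/τ) := by
  have hrel := congrArg (· ^ n) <| add_int_mul_eq_zpow_mul (G := fun w => g w * cexp (2*π*I*w^2/τ))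
    hε (mul_cexp_sq_add_half_period hτ hg) z a
  have hexp_z : cexp (-2*π*I*n*z^2/τ) = (cexp (2*π*I*z^2/τ) ^ n)⁻¹ := by
    rw [← Complex.exp_nat_mul, ← Complex.exp_neg]
    congr 1
    ring
  have hexp_w : cexp (2*π*I*n*(z + a*(τ/2))^2/τ) = cexp (2*π*I*(z + a*(τ/2))^2/τ) ^ n := by
    rw [← Complex.exp_nat_mul]
    congr 1
    ring
  simp only [mul_pow] at hrel
  rw [zpow_neg, zpow_natCast, zpow_neg, zpow_mul, zpow_natCast, hexp_z, hexp_w]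
  have hv := pow_ne_zero n hza
  have hp := pow_ne_zero n (Complex.exp_ne_zero (2*π*I*z^2/τ))
  have hεa := pow_ne_zero n (zpow_ne_zero a hε)
  generalize g (z + a*(τ/2)) ^ n = v at hrel hv ⊢
  generalize cexp (2*π*I*z^2/τ) ^ n = p at hrel hp ⊢
  generalize cexp (2*π*I*(z + a*(τ/2))^2/τ) ^ n = q at hrel ⊢
  generalize (ε ^ a) ^ n = e at hrel hεa ⊢
  generalize g z ^ n = u at hrel ⊢
  field_simp
  linear_combination -hrel

end HalfPeriod

theorem Mtau_theta_conjugation_general (τ η : ℂ) (hτ : 0 < τ.im)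
    (th : ℂ → ℂ → ℂ) (d : ℤ)
    (hth : (th = theta3 ∧ d = 0) ∨ (th = theta4 ∧ d = 1))
    (n m : ℕ) (f : ℂ → ℂ) (z : ℂ)
    (hthz : ∀ s : ℕ, s ≤ m → th (z + ((m:ℂ)-2*s)*τ/2) (τ/2) ≠ 0) :
    th z (τ/2)^n * MtauOp τ η m (fun w => th w (τ/2) ^ (-(n:ℤ)) * f w) z =
      (-1:ℂ)^((m:ℤ)*(n:ℤ)*d) * Complex.exp (-2*π*I*(n:ℂ)*z^2/τ) *
      MtauOp τ η m (fun w => Complex.exp (2*π*I*(n:ℂ)*w^2/τ) * f w) z := by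
  have hτ0 : τ ≠ 0 := fun h => by simp [h] at hτ
  simp only [MtauOp, Finset.mul_sum]
  refine Finset.sum_congr rfl fun s hs => ?_
  set a : ℤ := m - 2*s
  have hw : z + ((m:ℂ) - 2*s)*τ/2 = z + a*(τ/2) := by
    push_cast [a]
    ring
  have hsign : ((-1:ℂ) ^ d) ^ (-(a*n)) = (-1) ^ ((m:ℤ)*n*d) := by
    rw [← zpow_mul, show d * -(a*n) = m*n*d + 2*(s*n*d - m*n*d) by simp only [a]; ring,
      zpow_add₀ (by norm_num), zpow_mul (-1 : ℂ) 2]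
    norm_num
  have key := pow_mul_zpow_neg_add_int_mul_half_period (g := fun w => th w (τ/2)) hτ0
    (zpow_ne_zero d (by norm_num : (-1:ℂ) ≠ 0))
    (fun w => theta34_add_self hth w (τ/2)) z a n
    (hw ▸ hthz s (Nat.lt_succ_iff.mp (Finset.mem_range.mp hs)))
  rw [hsign] at key
  rw [hw]
  linear_combination (cexp (2*π*I*z^2/τ) * ((-1)^s * betaC τ η m s z *
    cexp (-2*π*I*(z + a*(τ/2))^2/τ) * f (z + a*(τ/2)))) * key

/-- conjugation of M(mτ/2) by theta-function powers. -/
theorem Mtau_theta_conjugation (τ η : ℂ) (hτ : 0 < τ.im) (hη : 0 < η.im)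
    (th : ℂ → ℂ → ℂ) (d : ℤ)
    (hth : (th = theta3 ∧ d = 0) ∨ (th = theta4 ∧ d = 1))
    (n m : ℕ) (f : ℂ → ℂ) (z : ℂ)
    (hthz : ∀ s : ℕ, s ≤ m → th (z + ((m:ℂ)-2*s)*τ/2) (τ/2) ≠ 0)
    (hβ : ∀ a : ℤ, |a| ≤ (m:ℤ) → theta1 (2*z - τ*(a:ℂ)) (2*η) ≠ 0)
    (hbin : ∀ i : ℕ, 1 ≤ i → i ≤ m → theta1 (τ*(i:ℂ)) (2*η) ≠ 0) :
    th z (τ/2)^n * MtauOp τ η m (fun w => th w (τ/2) ^ (-(n:ℤ)) * f w) z =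
      (-1:ℂ)^((m:ℤ)*(n:ℤ)*d) * Complex.exp (-2*π*I*(n:ℂ)*z^2/τ) *
      MtauOp τ η m (fun w => Complex.exp (2*π*I*(n:ℂ)*w^2/τ) * f w) z :=
  Mtau_theta_conjugation_general τ η hτ th d hth n m f z hthz
end
end

section
/- Linear independence of theta monomials: for every integer N ≥ 0 and every pair of distinct indices k₁ ≠ k₂ in {1,2,3,4}, if complex numbers c_0, …, c_N satisfy ∑_{k=0}^{N} c_k · θ_{k₁}(z|τ)^{2k} · θ_{k₂}(z|τ)^{2(N−k)} = 0 for all z ∈ ℂ, then c_k = 0 for all 0 ≤ k ≤ N. -/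
noncomputable section

open Complex BigOperators Finset

local notation "π" => (Real.pi : ℂ)

/-- θ_a(z|σ) indexed by a ∈ {1,2,3,4}. -/
def thJ : ℕ → ℂ → ℂ → ℂ
  | 1 => theta1
  | 2 => theta2
  | 3 => theta3
  | 4 => theta4
  | _ => fun _ _ => 0

/-!
Put x = θ_{k₁}/θ_{k₂}. Where θ_{k₂} ≠ 0 the hypothesis says that x is a root of the nonzero
polynomial ∑ c_k X^{2k}; near such a point x is continuous with values in a finite set, hence
constant, and by the identity theorem θ_{k₁} = s θ_{k₂} on all of ℂ. This is impossible:
under z ↦ z + 1 or under z ↦ z + τ the two thetas pick up the same multiplier up to opposite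
signs, and neither vanishes identically since ∫₀¹ θ₃(x|τ) dx = 1.
-/

theorem integral_jacobiTheta₂_term (n : ℤ) (τ : ℂ) :
    ∫ x in (0 : ℝ)..1, jacobiTheta₂_term n x τ = if n = 0 then 1 else 0 := by
  split_ifs with hn
  · simp [hn, jacobiTheta₂_term]
  have hterm : ∀ x : ℝ, jacobiTheta₂_term n x τ
      = cexp (π * I * n ^ 2 * τ) * cexp ((2 * π * I * n) * x) := fun x => by
    rw [jacobiTheta₂_term, ← Complex.exp_add, add_comm]
  have hc : 2 * π * I * n ≠ 0 := by simp [Real.pi_ne_zero, I_ne_zero, hn]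
  simp only [hterm, intervalIntegral.integral_const_mul, integral_exp_mul_complex hc]
  rw [show 2 * π * I * n * (1 : ℝ) = n * (2 * π * I) by push_cast; ring,
    Complex.exp_int_mul_two_pi_mul_I]
  simp

theorem integral_jacobiTheta₂ {τ : ℂ} (hτ : 0 < τ.im) :
    ∫ x in (0 : ℝ)..1, jacobiTheta₂ x τ = 1 := by
  have hnorm : ∀ (n : ℤ) (x : ℝ), ‖jacobiTheta₂_term n x τ‖ = ‖jacobiTheta₂_term n 0 τ‖ :=
    fun n x => by simp [norm_jacobiTheta₂_term]
  have hint : ∀ n : ℤ, MeasureTheory.Integrable (fun x : ℝ => jacobiTheta₂_term n x τ)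
      (MeasureTheory.volume.restrict (Set.Ioc 0 1)) := fun n =>
    (Continuous.integrableOn_Ioc (by unfold jacobiTheta₂_term; fun_prop))
  have hsum : Summable fun n : ℤ => ∫ x in Set.Ioc (0 : ℝ) 1, ‖jacobiTheta₂_term n x τ‖ := by
    simpa [hnorm] using ((summable_jacobiTheta₂_term_iff 0 τ).mpr hτ).norm
  rw [intervalIntegral.integral_of_le zero_le_one]
  unfold jacobiTheta₂
  rw [← MeasureTheory.integral_tsum_of_summable_integral_norm hint hsum]
  simp only [← intervalIntegral.integral_of_le zero_le_one, integral_jacobiTheta₂_term]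
  simp

theorem exists_jacobiTheta₂_ne_zero {τ : ℂ} (hτ : 0 < τ.im) : ∃ z, jacobiTheta₂ z τ ≠ 0 := by
  by_contra! h
  simpa [h] using integral_jacobiTheta₂ hτ

theorem differentiable_jacobiTheta₂_add {τ : ℂ} (hτ : 0 < τ.im) (c : ℂ) :
    Differentiable ℂ fun z => jacobiTheta₂ (z + c) τ := fun z =>
  (differentiableAt_jacobiTheta₂_fst (z + c) hτ).comp z (differentiableAt_id.add_const c)

open Polynomial in
theorem exists_eq_const_mul_of_eval_div_eq_zero {f g : ℂ → ℂ} (hf : Differentiable ℂ f)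
    (hg : Differentiable ℂ g) {z₀ : ℂ} (hz₀ : g z₀ ≠ 0) {p : ℂ[X]} (hp : p ≠ 0)
    (hpfg : ∀ z, g z ≠ 0 → p.eval (f z / g z) = 0) : ∃ s, ∀ z, f z = s * g z := by
  obtain ⟨ε, hε, hball⟩ :=
    Metric.isOpen_iff.mp (isOpen_ne_fun hg.continuous continuous_const) z₀ hz₀
  have hmaps : Set.MapsTo (fun z => f z / g z) (Metric.ball z₀ ε) (p.rootSet ℂ) := fun z hz => by
    simpa [Polynomial.mem_rootSet, hp] using hpfg z (hball hz)
  obtain ⟨s, -, hs⟩ := (convex_ball z₀ ε).isPreconnected.eqOn_const_of_mapsTo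
    (p.rootSet_finite ℂ).isDiscrete
    (hf.continuous.continuousOn.div hg.continuous.continuousOn fun z hz => hball hz) hmaps
    ⟨_, hmaps (Metric.mem_ball_self hε)⟩
  have hlocal : f =ᶠ[nhds z₀] fun z => s * g z := by
    filter_upwards [Metric.ball_mem_nhds z₀ hε] with z hz
    exact (div_eq_iff (hball hz)).mp (hs hz)
  refine ⟨s, congrFun ?_⟩
  exact (analyticOnNhd_univ_iff_differentiable.mpr hf).eq_of_eventuallyEq
    (analyticOnNhd_univ_iff_differentiable.mpr (hg.const_mul s)) hlocal

open Polynomial in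
theorem coeff_eq_zero_of_sum_pow_mul_pow_eq_zero {f g : ℂ → ℂ} (hf : Differentiable ℂ f)
    (hg : Differentiable ℂ g) {z₀ : ℂ} (hz₀ : g z₀ ≠ 0) (hfg : ∀ s, ∃ z, f z ≠ s * g z)
    {m : ℕ} (hm : m ≠ 0) {N : ℕ} {c : ℕ → ℂ}
    (hc : ∀ z, ∑ k ∈ range (N + 1), c k * f z ^ (m * k) * g z ^ (m * (N - k)) = 0) :
    ∀ k ≤ N, c k = 0 := by
  set p : ℂ[X] := ∑ k ∈ range (N + 1), C (c k) * X ^ (m * k)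
  have hcoeff : ∀ k ≤ N, p.coeff (m * k) = c k := fun k hk => by
    rw [finsetSum_coeff, sum_eq_single k
      (fun j _ hjk => by simp [coeff_X_pow, (mul_right_injective₀ hm).ne hjk.symm])
      (fun hk' => absurd (mem_range.mpr (Nat.lt_succ_of_le hk)) hk')]
    simp
  suffices p = 0 from fun k hk => by rw [← hcoeff k hk, this, coeff_zero]
  by_contra hp
  have hpfg : ∀ z, g z ≠ 0 → p.eval (f z / g z) = 0 := fun z hz => by
    have hgN : g z ^ (m * N) ≠ 0 := pow_ne_zero _ hz
    refine (mul_eq_zero.mp ?_).resolve_left hgN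
    rw [← hc z, eval_finsetSum, mul_sum]
    refine sum_congr rfl fun k hk => ?_
    have hkN : k ≤ N := Nat.lt_succ_iff.mp (mem_range.mp hk)
    rw [eval_mul, eval_C, eval_pow, eval_X, show m * N = m * (N - k) + m * k by
      rw [← mul_add, Nat.sub_add_cancel hkN], pow_add, div_pow]
    field_simp
  obtain ⟨s, hs⟩ := exists_eq_const_mul_of_eval_div_eq_zero hf hg hz₀ hp hpfg
  obtain ⟨z, hz⟩ := hfg s
  exact hz (hs z)

theorem eq_zero_of_eq_const_mul_of_quasiperiodic {F G m : ℂ → ℂ} {t e f s : ℂ}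
    (hF : ∀ z, F (z + t) = e * m z * F z) (hG : ∀ z, G (z + t) = f * m z * G z)
    (hm : ∀ z, m z ≠ 0) (hef : e ≠ f) (hs : ∀ z, F z = s * G z) (z : ℂ) : F z = 0 := by
  have h : (e - f) * m z * F z = 0 := by
    linear_combination -hF z + hs (z + t) + s * hG z - f * m z * hs z
  simpa [sub_ne_zero.mpr hef, hm z] using h

theorem theta1_eq (z τ : ℂ) :
    theta1 z τ = -cexp (π * I * (τ / 4 + z + 1 / 2)) * jacobiTheta₂ (z + 1 / 2 + τ / 2) τ := by
  rw [theta1, jacobiTheta₂, ← tsum_mul_left, ← tsum_neg]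
  refine tsum_congr fun n => ?_
  simp only [jacobiTheta₂_term, neg_mul, ← Complex.exp_add]
  congr 2
  ring

theorem theta2_eq (z τ : ℂ) :
    theta2 z τ = cexp (π * I * (τ / 4 + z)) * jacobiTheta₂ (z + τ / 2) τ := by
  rw [theta2, theta1_eq, show z + 1 / 2 + 1 / 2 + τ / 2 = z + τ / 2 + 1 by ring,
    jacobiTheta₂_add_left, neg_mul, neg_eq_iff_eq_neg, ← neg_mul, ← exp_add_pi_mul_I]
  congr 2
  ring

theorem theta3_eq (z τ : ℂ) : theta3 z τ = jacobiTheta₂ z τ := by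
  rw [theta3, theta2_eq, show z + τ / 2 + τ / 2 = z + τ by ring, jacobiTheta₂_add_left',
    ← mul_assoc, ← mul_assoc, ← Complex.exp_add, ← Complex.exp_add]
  convert one_mul _
  rw [← Complex.exp_zero]
  congr 1
  ring

theorem theta4_eq (z τ : ℂ) : theta4 z τ = jacobiTheta₂ (z + 1 / 2) τ := by
  rw [theta4, theta3_eq]

theorem theta1_add_one (z τ : ℂ) : theta1 (z + 1) τ = -theta1 z τ := by
  rw [theta1_eq, theta1_eq, show z + 1 + 1 / 2 + τ / 2 = z + 1 / 2 + τ / 2 + 1 by ring,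
    jacobiTheta₂_add_left, show π * I * (τ / 4 + (z + 1) + 1 / 2)
      = π * I * (τ / 4 + z + 1 / 2) + π * I by ring, exp_add_pi_mul_I]
  ring

theorem theta2_add_one (z τ : ℂ) : theta2 (z + 1) τ = -theta2 z τ := by
  rw [theta2, theta2, add_right_comm, theta1_add_one]

theorem theta3_add_one (z τ : ℂ) : theta3 (z + 1) τ = theta3 z τ := by
  rw [theta3_eq, theta3_eq, jacobiTheta₂_add_left]

theorem theta4_add_one (z τ : ℂ) : theta4 (z + 1) τ = theta4 z τ := by
  rw [theta4, theta4, add_right_comm, theta3_add_one]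

theorem theta2_add_tau (z τ : ℂ) :
    theta2 (z + τ) τ = cexp (-π * I * (τ + 2 * z)) * theta2 z τ := by
  rw [theta2_eq, theta2_eq, add_right_comm, jacobiTheta₂_add_left']
  simp only [← mul_assoc, ← Complex.exp_add]
  congr 2
  ring

theorem theta1_add_tau (z τ : ℂ) :
    theta1 (z + τ) τ = -cexp (-π * I * (τ + 2 * z)) * theta1 z τ := by
  have h := theta2_add_tau (z - 1 / 2) τ
  rw [theta2, theta2, sub_add_cancel, add_right_comm, sub_add_cancel] at h
  rw [h, ← exp_add_pi_mul_I]
  congr 2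
  ring

theorem theta3_add_tau (z τ : ℂ) :
    theta3 (z + τ) τ = cexp (-π * I * (τ + 2 * z)) * theta3 z τ := by
  rw [theta3_eq, theta3_eq, jacobiTheta₂_add_left']

theorem theta4_add_tau (z τ : ℂ) :
    theta4 (z + τ) τ = -cexp (-π * I * (τ + 2 * z)) * theta4 z τ := by
  rw [theta4, theta4, add_right_comm, theta3_add_tau, ← exp_sub_pi_mul_I]
  congr 2
  ring

theorem differentiable_thJ {τ : ℂ} (hτ : 0 < τ.im) {a : ℕ}
    (ha : a ∈ ({1, 2, 3, 4} : Finset ℕ)) :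
    Differentiable ℂ fun z => thJ a z τ := by
  have hJ := differentiable_jacobiTheta₂_add hτ
  fin_cases ha
  · simp only [thJ, theta1_eq, add_assoc]
    have := hJ (1 / 2 + τ / 2)
    fun_prop
  · simp only [thJ, theta2_eq]
    have := hJ (τ / 2)
    fun_prop
  · simpa [thJ, theta3_eq] using hJ 0
  · simpa [thJ, theta4_eq] using hJ (1 / 2)

theorem exists_thJ_ne_zero {τ : ℂ} (hτ : 0 < τ.im) {a : ℕ}
    (ha : a ∈ ({1, 2, 3, 4} : Finset ℕ)) :
    ∃ z, thJ a z τ ≠ 0 := by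
  obtain ⟨w, hw⟩ := exists_jacobiTheta₂_ne_zero hτ
  fin_cases ha
  · exact ⟨w - τ / 2 - 1 / 2, by simp [thJ, theta1_eq, hw, Complex.exp_ne_zero]⟩
  · exact ⟨w - τ / 2, by simp [thJ, theta2_eq, hw, Complex.exp_ne_zero]⟩
  · exact ⟨w, by simpa [thJ, theta3_eq] using hw⟩
  · exact ⟨w - 1 / 2, by simpa [thJ, theta4_eq] using hw⟩

theorem thJ_add_one {a : ℕ} (ha : a ∈ ({1, 2, 3, 4} : Finset ℕ)) (z τ : ℂ) :
    thJ a (z + 1) τ = (if a ≤ 2 then -1 else 1) * thJ a z τ := by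
  fin_cases ha <;> simp [thJ, theta1_add_one, theta2_add_one, theta3_add_one, theta4_add_one]

theorem thJ_add_tau {a : ℕ} (ha : a ∈ ({1, 2, 3, 4} : Finset ℕ)) (z τ : ℂ) :
    thJ a (z + τ) τ =
      (if a = 1 ∨ a = 4 then -1 else 1) * cexp (-π * I * (τ + 2 * z)) * thJ a z τ := by
  fin_cases ha <;> simp [thJ, theta1_add_tau, theta2_add_tau, theta3_add_tau, theta4_add_tau]

theorem exists_thJ_ne_const_mul {τ : ℂ} (hτ : 0 < τ.im) {a b : ℕ}
    (ha : a ∈ ({1, 2, 3, 4} : Finset ℕ)) (hb : b ∈ ({1, 2, 3, 4} : Finset ℕ)) (hab : a ≠ b)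
    (s : ℂ) : ∃ z, thJ a z τ ≠ s * thJ b z τ := by
  by_contra! hs
  obtain ⟨z₀, hz₀⟩ := exists_thJ_ne_zero hτ ha
  have hsign : (if a ≤ 2 then (-1 : ℂ) else 1) ≠ (if b ≤ 2 then -1 else 1) ∨
      (if a = 1 ∨ a = 4 then (-1 : ℂ) else 1) ≠ (if b = 1 ∨ b = 4 then -1 else 1) := by
    fin_cases ha <;> fin_cases hb <;> simp at hab ⊢ <;> norm_num
  refine hz₀ ?_
  rcases hsign with h | h
  · exact eq_zero_of_eq_const_mul_of_quasiperiodic (m := fun _ => 1)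
      (fun z => by rw [thJ_add_one ha, mul_one]) (fun z => by rw [thJ_add_one hb, mul_one])
      (fun _ => one_ne_zero) h hs z₀
  · exact eq_zero_of_eq_const_mul_of_quasiperiodic (thJ_add_tau ha · τ) (thJ_add_tau hb · τ)
      (fun _ => Complex.exp_ne_zero _) h hs z₀

/-- linear independence of theta monomials. -/
theorem theta_monomials_linear_independent (τ : ℂ) (hτ : 0 < τ.im)
    (N : ℕ) (k₁ k₂ : ℕ)
    (h1 : k₁ ∈ ({1,2,3,4} : Finset ℕ)) (h2 : k₂ ∈ ({1,2,3,4} : Finset ℕ)) (hne : k₁ ≠ k₂)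
    (c : ℕ → ℂ)
    (hc : ∀ z : ℂ, ∑ k ∈ Finset.range (N+1),
        c k * thJ k₁ z τ ^ (2*k) * thJ k₂ z τ ^ (2*(N-k)) = 0) :
    ∀ k ≤ N, c k = 0 := by
  obtain ⟨z₀, hz₀⟩ := exists_thJ_ne_zero hτ h2
  exact coeff_eq_zero_of_sum_pow_mul_pow_eq_zero (differentiable_thJ hτ h1)
    (differentiable_thJ hτ h2) hz₀ (exists_thJ_ne_const_mul hτ h1 h2 hne) two_ne_zero hc
end
end
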